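/- arXiv:1909.03190 — 2 statements merged into one kernel-verified Lean document; each statement's English description precedes it below -/
import Mathlib

section
/- (Reduction of the radial singular Yamabe equation to a Newton ODE.) Let n ≥ 3, κ > 0, let v : ℝ → (0, ∞) be twice differentiable, and define u : ℝⁿ \ {0} → ℝ by u(x) = |x|^((2−n)/2) v(log |x|). Then u satisfies −Δu = κ u^((n+2)/(n−2)) on ℝⁿ \ {0} if and only if v satisfies −v''(t) = κ v(t)^((n+2)/(n−2)) − ((n−2)/2)² v(t) for all t ∈ ℝ. -/
/-!
The function `g(log ‖y‖)` has Laplacian `(g'' + (n - 2) g') / ‖y‖²`, which follows from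
`Δ h(‖y‖²) = 2n h'(‖y‖²) + 4 ‖y‖² h''(‖y‖²)` with `h(s) = g(log s / 2)`. For
`g(t) = e^{αt} v(t)` and `α = (2 - n) / 2` the first-order term cancels, leaving
`Δu = ‖y‖^(α - 2) (v'' - α² v)`. Since `α (n + 2) / (n - 2) = α - 2`, the nonlinearity
`u^((n + 2) / (n - 2))` carries the same factor `‖y‖^(α - 2)`, which cancels, and every
`t ∈ ℝ` is `log ‖y‖` for some `y ≠ 0`.
-/

open Real

/-- The Euclidean Laplacian: the sum of the second partial derivatives. -/
noncomputable def lap {n : ℕ} (u : EuclideanSpace ℝ (Fin n) → ℝ)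
    (x : EuclideanSpace ℝ (Fin n)) : ℝ :=
  ∑ i : Fin n, fderiv ℝ (fun y => fderiv ℝ u y (EuclideanSpace.single i 1)) x
    (EuclideanSpace.single i 1)

open Filter Topology

section

variable {n : ℕ}

theorem Filter.EventuallyEq.lap_eq {u w : EuclideanSpace ℝ (Fin n) → ℝ}
    {x : EuclideanSpace ℝ (Fin n)} (h : u =ᶠ[𝓝 x] w) : lap u x = lap w x := by
  refine Finset.sum_congr rfl fun i _ => ?_
  have h' : (fun y => fderiv ℝ u y (EuclideanSpace.single i 1))
      =ᶠ[𝓝 x] fun y => fderiv ℝ w y (EuclideanSpace.single i 1) :=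
    h.eventuallyEq_nhds.mono fun y hy => by simp only [hy.fderiv_eq]
  rw [h'.fderiv_eq]

theorem lap_comp_norm_sq {h h₁ : ℝ → ℝ} {h₂ : ℝ} {x : EuclideanSpace ℝ (Fin n)}
    (hh : ∀ᶠ s in 𝓝 (‖x‖ ^ 2), HasDerivAt h (h₁ s) s)
    (hh₁ : HasDerivAt h₁ h₂ (‖x‖ ^ 2)) :
    lap (fun y => h (‖y‖ ^ 2)) x = 2 * n * h₁ (‖x‖ ^ 2) + 4 * ‖x‖ ^ 2 * h₂ := by
  have hq : ∀ y : EuclideanSpace ℝ (Fin n),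
      HasFDerivAt (fun y : EuclideanSpace ℝ (Fin n) => ‖y‖ ^ 2) (2 • innerSL ℝ y) y :=
    fun y => (hasStrictFDerivAt_norm_sq y).hasFDerivAt
  have hfirst : ∀ i : Fin n,
      (fun y => fderiv ℝ (fun y : EuclideanSpace ℝ (Fin n) => h (‖y‖ ^ 2)) y
          (EuclideanSpace.single i 1)) =ᶠ[𝓝 x] fun y => h₁ (‖y‖ ^ 2) * (2 * y i) := by
    intro i
    have hcont : Tendsto (fun y : EuclideanSpace ℝ (Fin n) => ‖y‖ ^ 2) (𝓝 x) (𝓝 (‖x‖ ^ 2)) :=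
      (continuous_norm.pow 2).tendsto x
    filter_upwards [hcont.eventually hh] with y hy
    have hd : HasFDerivAt (fun y : EuclideanSpace ℝ (Fin n) => h (‖y‖ ^ 2))
        (h₁ (‖y‖ ^ 2) • 2 • innerSL ℝ y) y := hy.comp_hasFDerivAt y (hq y)
    rw [hd.fderiv]
    simp [EuclideanSpace.inner_single_right]
  have hsecond : ∀ i : Fin n,
      fderiv ℝ (fun y => h₁ (‖y‖ ^ 2) * (2 * y i)) x (EuclideanSpace.single i 1)
        = 2 * h₁ (‖x‖ ^ 2) + 4 * h₂ * x i ^ 2 := by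
    intro i
    have hlin : HasFDerivAt (fun y : EuclideanSpace ℝ (Fin n) => 2 * y i)
        ((2 : ℝ) • EuclideanSpace.proj (𝕜 := ℝ) i) x :=
      (EuclideanSpace.proj (𝕜 := ℝ) i).hasFDerivAt.const_mul 2
    have hd : HasFDerivAt (fun y : EuclideanSpace ℝ (Fin n) => h₁ (‖y‖ ^ 2))
        (h₂ • 2 • innerSL ℝ x) x := hh₁.comp_hasFDerivAt x (hq x)
    rw [(hd.fun_mul hlin).fderiv]
    simp only [add_apply, smul_apply, PiLp.proj_apply, PiLp.single_eq_same, smul_eq_mul, mul_one,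
      coe_innerSL_apply, EuclideanSpace.inner_single_right, conj_trivial, one_mul, nsmul_eq_mul,
      Nat.cast_ofNat]
    ring
  rw [lap, Finset.sum_congr rfl fun i _ => by rw [(hfirst i).fderiv_eq, hsecond],
    Finset.sum_add_distrib, Finset.sum_const, ← Finset.mul_sum, ← EuclideanSpace.real_norm_sq_eq,
    Finset.card_univ, Fintype.card_fin, nsmul_eq_mul]
  ring

theorem lap_comp_log_norm {g g₁ g₂ : ℝ → ℝ} (hg : ∀ t, HasDerivAt g (g₁ t) t)
    (hg₁ : ∀ t, HasDerivAt g₁ (g₂ t) t) {x : EuclideanSpace ℝ (Fin n)} (hx : x ≠ 0) :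
    lap (fun y => g (log ‖y‖)) x
      = (g₂ (log ‖x‖) + (n - 2) * g₁ (log ‖x‖)) / ‖x‖ ^ 2 := by
  have hlog : ∀ r : ℝ, log (r ^ 2) / 2 = log r := fun r => by rw [log_pow]; push_cast; ring
  have hs : 0 < ‖x‖ ^ 2 := by positivity
  have hcomp_log : ∀ {f f' : ℝ → ℝ}, (∀ t, HasDerivAt f (f' t) t) → ∀ s, 0 < s →
      HasDerivAt (fun s => f (log s / 2)) (f' (log s / 2) * (s⁻¹ / 2)) s :=
    fun hf s hs => (hf _).comp s ((hasDerivAt_log hs.ne').div_const 2)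
  have hcomp := lap_comp_norm_sq (x := x) ((eventually_gt_nhds hs).mono (hcomp_log hg))
    ((hcomp_log hg₁ _ hs).fun_mul ((hasDerivAt_inv hs.ne').div_const 2))
  simp only [hlog] at hcomp
  rw [hcomp]
  field_simp
  ring

theorem hasDerivAt_exp_mul_mul {g : ℝ → ℝ} {g' t : ℝ} (α : ℝ) (hg : HasDerivAt g g' t) :
    HasDerivAt (fun t => exp (α * t) * g t) (exp (α * t) * (α * g t + g')) t := by
  have he : HasDerivAt (fun t => exp (α * t)) (exp (α * t) * α) t := by
    simpa using ((hasDerivAt_id t).const_mul α).exp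
  exact (he.fun_mul hg).congr_deriv (by ring)

theorem lap_rpow_norm_mul_comp_log {v v' v'' : ℝ → ℝ} (hv : ∀ t, HasDerivAt v (v' t) t)
    (hv' : ∀ t, HasDerivAt v' (v'' t) t) (α : ℝ) {x : EuclideanSpace ℝ (Fin n)} (hx : x ≠ 0) :
    lap (fun y => ‖y‖ ^ α * v (log ‖y‖)) x
      = ‖x‖ ^ (α - 2) * (v'' (log ‖x‖) + (2 * α + n - 2) * v' (log ‖x‖)
          + α * (α + n - 2) * v (log ‖x‖)) := by
  have hr : 0 < ‖x‖ := norm_pos_iff.mpr hx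
  have hexp : (fun y => ‖y‖ ^ α * v (log ‖y‖))
      =ᶠ[𝓝 x] fun y => (fun t => exp (α * t) * v t) (log ‖y‖) := by
    filter_upwards [isOpen_compl_singleton.mem_nhds hx] with y hy
    rw [rpow_def_of_pos (norm_pos_iff.mpr hy), mul_comm (log ‖y‖)]
  rw [hexp.lap_eq, lap_comp_log_norm (fun t => hasDerivAt_exp_mul_mul α (hv t))
    (fun t => hasDerivAt_exp_mul_mul α (((hv t).const_mul α).add (hv' t))) hx,
    rpow_sub hr, rpow_two, rpow_def_of_pos hr, mul_comm (log ‖x‖)]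
  field_simp
  ring

theorem rpow_mul_rpow_critical_exponent {m r v : ℝ} (hm : m ≠ 2) (hr : 0 < r) (hv : 0 ≤ v) :
    (r ^ ((2 - m) / 2) * v) ^ ((m + 2) / (m - 2))
      = r ^ ((2 - m) / 2 - 2) * v ^ ((m + 2) / (m - 2)) := by
  have hm' : m - 2 ≠ 0 := sub_ne_zero.mpr hm
  rw [mul_rpow (rpow_nonneg hr.le _) hv, ← rpow_mul hr.le]
  congr 2
  field_simp
  ring

theorem neg_lap_eq_rpow_iff_newton {v v' v'' : ℝ → ℝ} (hv : ∀ t, HasDerivAt v (v' t) t)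
    (hv' : ∀ t, HasDerivAt v' (v'' t) t) (hvpos : ∀ t, 0 < v t) (hn : (n : ℝ) ≠ 2) (κ : ℝ)
    {x : EuclideanSpace ℝ (Fin n)} (hx : x ≠ 0) :
    -lap (fun y => ‖y‖ ^ ((2 - (n : ℝ)) / 2) * v (log ‖y‖)) x
        = κ * (‖x‖ ^ ((2 - (n : ℝ)) / 2) * v (log ‖x‖)) ^ (((n : ℝ) + 2) / (n - 2))
      ↔ -v'' (log ‖x‖) = κ * v (log ‖x‖) ^ (((n : ℝ) + 2) / (n - 2))
          - (((n : ℝ) - 2) / 2) ^ 2 * v (log ‖x‖) := by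
  have hr : 0 < ‖x‖ := norm_pos_iff.mpr hx
  have hC : 0 < ‖x‖ ^ ((2 - (n : ℝ)) / 2 - 2) := rpow_pos_of_pos hr _
  rw [lap_rpow_norm_mul_comp_log hv hv' _ hx, rpow_mul_rpow_critical_exponent hn hr (hvpos _).le]
  constructor
  · intro h
    exact mul_left_cancel₀ hC.ne' (by linear_combination h)
  · intro h
    linear_combination ‖x‖ ^ ((2 - (n : ℝ)) / 2 - 2) * h

end

theorem stmt_5_general (n : ℕ) (hn : 3 ≤ n) (κ : ℝ)
    (v v' v'' : ℝ → ℝ) (hvpos : ∀ t, 0 < v t)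
    (hv' : ∀ t, HasDerivAt v (v' t) t) (hv'' : ∀ t, HasDerivAt v' (v'' t) t) :
    (∀ x : EuclideanSpace ℝ (Fin n), x ≠ 0 →
        -lap (fun y => ‖y‖ ^ (((2 : ℝ) - (n : ℝ)) / 2) * v (Real.log ‖y‖)) x
          = κ * (‖x‖ ^ (((2 : ℝ) - (n : ℝ)) / 2) * v (Real.log ‖x‖))
              ^ (((n : ℝ) + 2) / ((n : ℝ) - 2)))
      ↔ (∀ t : ℝ,
          -v'' t = κ * v t ^ (((n : ℝ) + 2) / ((n : ℝ) - 2))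
            - (((n : ℝ) - 2) / 2) ^ 2 * v t) := by
  have hn2 : (n : ℝ) ≠ 2 := by exact_mod_cast (by omega : n ≠ 2)
  constructor
  · intro h t
    have : NeZero n := ⟨by omega⟩
    obtain ⟨x, hx⟩ := exists_norm_eq (EuclideanSpace ℝ (Fin n)) (exp_pos t).le
    have hx0 : x ≠ 0 := norm_pos_iff.mp (hx ▸ exp_pos t)
    simpa [hx] using (neg_lap_eq_rpow_iff_newton hv' hv'' hvpos hn2 κ hx0).mp (h x hx0)
  · intro h x hx
    exact (neg_lap_eq_rpow_iff_newton hv' hv'' hvpos hn2 κ hx).mpr (h _)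

/-- Reduction of the radial singular Yamabe equation to a Newton ODE:
`u(x) = |x|^((2-n)/2) v(log |x|)` solves `-Δu = κ u^((n+2)/(n-2))` on `ℝⁿ \ {0}`
iff `v` solves `-v'' = κ v^((n+2)/(n-2)) - ((n-2)/2)² v` on `ℝ`. -/
theorem stmt_5 (n : ℕ) (hn : 3 ≤ n) (κ : ℝ) (hκ : 0 < κ)
    (v v' v'' : ℝ → ℝ) (hvpos : ∀ t, 0 < v t)
    (hv' : ∀ t, HasDerivAt v (v' t) t) (hv'' : ∀ t, HasDerivAt v' (v'' t) t) :
    (∀ x : EuclideanSpace ℝ (Fin n), x ≠ 0 →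
        -lap (fun y => ‖y‖ ^ (((2 : ℝ) - (n : ℝ)) / 2) * v (Real.log ‖y‖)) x
          = κ * (‖x‖ ^ (((2 : ℝ) - (n : ℝ)) / 2) * v (Real.log ‖x‖))
              ^ (((n : ℝ) + 2) / ((n : ℝ) - 2)))
      ↔ (∀ t : ℝ,
          -v'' t = κ * v t ^ (((n : ℝ) + 2) / ((n : ℝ) - 2))
            - (((n : ℝ) - 2) / 2) ^ 2 * v t) :=
  stmt_5_general n hn κ v v' v'' hvpos hv' hv''
end

section
/- (Pointwise radial boundary identity.) Let n ≥ 3, κ ∈ ℝ, let v : ℝ → (0, ∞) be differentiable, and define u(r) = r^((2−n)/2) v(log r) for r > 0. Then for every r > 0: (1/2) r u'(r)² + κ ((n−2)/(2n)) r u(r)^(2n/(n−2)) + ((n−2)/2) u(r) u'(r) = r^(1−n) [ (1/2) v'(log r)² + κ ((n−2)/(2n)) v(log r)^(2n/(n−2)) − (1/2) ((n−2)/2)² v(log r)² ]. -/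
/-!
Write `α = (2 - n)/2`, `A = v(log r)`, `B = v'(log r)`. Then `u(r) = r^α A` and
`u'(r) = r^(α-1) (α A + B)`, so the quadratic part of the boundary integrand is
`r^(2α-1) ((αA + B)²/2 - α A (αA + B)) = r^(1-n) (B²/2 - α² A²/2)`, while
`r u(r)^p = r^(1 + α p) A^p = r^(1-n) A^p` for the critical exponent `p = 2n/(n-2)`,
because `α p = -n`.
-/

open Real

theorem hasDerivAt_rpow_mul_comp_log {v : ℝ → ℝ} {B r : ℝ} (α : ℝ) (hr : 0 < r)
    (hv : HasDerivAt v B (log r)) :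
    HasDerivAt (fun x => x ^ α * v (log x)) (r ^ (α - 1) * (α * v (log r) + B)) r := by
  have hpow : HasDerivAt (fun x : ℝ => x ^ α) (α * r ^ (α - 1)) r :=
    hasDerivAt_rpow_const (Or.inl hr.ne')
  refine (hpow.mul (hv.comp r (hasDerivAt_log hr.ne'))).congr_deriv ?_
  rw [rpow_sub_one hr.ne', Function.comp_apply]
  field_simp

theorem radial_quadratic_identity {r : ℝ} (hr : 0 < r) (α A B : ℝ) :
    (1 / 2) * r * (r ^ (α - 1) * (α * A + B)) ^ 2
        - α * (r ^ α * A) * (r ^ (α - 1) * (α * A + B))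
      = r ^ (2 * α - 1) * ((1 / 2) * B ^ 2 - (1 / 2) * α ^ 2 * A ^ 2) := by
  have hα : r ^ α = r ^ (α - 1) * r := by rw [← rpow_add_one hr.ne', sub_add_cancel]
  have h2α : r ^ (2 * α - 1) = (r ^ (α - 1)) ^ 2 * r := by
    rw [show 2 * α - 1 = (α - 1) + (α - 1) + 1 by ring, rpow_add hr, rpow_add hr, rpow_one]
    ring
  rw [hα, h2α]
  ring

theorem mul_rpow_mul_rpow_eq {r A : ℝ} (hr : 0 < r) (hA : 0 ≤ A) (α p : ℝ) :
    r * (r ^ α * A) ^ p = r ^ (1 + α * p) * A ^ p := by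
  rw [mul_rpow (rpow_nonneg hr.le _) hA, ← rpow_mul hr.le, rpow_add hr, rpow_one, mul_assoc]

/-- Pointwise radial boundary identity: for `u(r) = r^((2-n)/2) v(log r)`, the radial
Pohozaev boundary integrand equals `r^(1-n)` times the Hamiltonian energy of `v`. -/
theorem stmt_8 (n : ℕ) (hn : 3 ≤ n) (κ : ℝ)
    (v v' : ℝ → ℝ) (hvpos : ∀ t, 0 < v t) (hv' : ∀ t, HasDerivAt v (v' t) t)
    (u : ℝ → ℝ) (hu : ∀ r : ℝ, u r = r ^ (((2 : ℝ) - (n : ℝ)) / 2) * v (Real.log r)) :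
    ∀ r : ℝ, 0 < r →
      (1 / 2) * r * (deriv u r) ^ 2
          + κ * (((n : ℝ) - 2) / (2 * (n : ℝ))) * r * u r ^ (2 * (n : ℝ) / ((n : ℝ) - 2))
          + (((n : ℝ) - 2) / 2) * u r * deriv u r
        = r ^ ((1 : ℝ) - (n : ℝ)) *
            ((1 / 2) * (v' (Real.log r)) ^ 2
              + κ * (((n : ℝ) - 2) / (2 * (n : ℝ)))
                  * v (Real.log r) ^ (2 * (n : ℝ) / ((n : ℝ) - 2))
              - (1 / 2) * (((n : ℝ) - 2) / 2) ^ 2 * (v (Real.log r)) ^ 2) := by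
  intro r hr
  have hn2 : (n : ℝ) - 2 ≠ 0 := by
    have : (3 : ℝ) ≤ n := by exact_mod_cast hn
    linarith
  set α : ℝ := ((2 : ℝ) - n) / 2 with hα
  have hderiv : deriv u r = r ^ (α - 1) * (α * v (log r) + v' (log r)) := by
    rw [show u = fun x => x ^ α * v (log x) from funext hu]
    exact (hasDerivAt_rpow_mul_comp_log α hr (hv' _)).deriv
  have hquad := radial_quadratic_identity hr α (v (log r)) (v' (log r))
  have hcrit := mul_rpow_mul_rpow_eq hr (hvpos (log r)).le α (2 * n / (n - 2))
  rw [show 2 * α - 1 = 1 - n by ring] at hquad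
  rw [show 1 + α * (2 * n / (n - 2)) = 1 - n by rw [hα]; field_simp; ring] at hcrit
  rw [hderiv, hu r]
  linear_combination hquad + κ * (((n : ℝ) - 2) / (2 * (n : ℝ))) * hcrit
end
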